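/- Let c_d > 0 be such that every d-ary preflow p satisfies N_x(p) ≤ exp(c_d + c_d√(log x)) for all x ≥ 1 (as in the preflow counting lemma). Then for any finite rooted plane tree t and any node u ∈ t such that the subtree θ_u t is d-ary and |θ_u t| ≤ |t|/3, the number of nodes v in θ_u t with φ_t(∅) ≥ φ_t(u*v) is at most exp(c_d + c_d √(log Φ(t))). -/

import Mathlib

open Finset
open scoped Classical

/-- A plane tree in the Ulam–Harris formalism: a finite set of words
containing the root, closed under parents, with children `u*0, …, u*(k-1)`. -/
def IsPlaneTree (t : Finset (List ℕ)) : Prop :=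
  [] ∈ t ∧ (∀ u ∈ t, u ≠ [] → u.dropLast ∈ t) ∧
  (∀ u j k, u ++ [j] ∈ t → k ≤ j → u ++ [k] ∈ t)

/-- `subSize t v` is the number of nodes of the subtree of `t` rooted at `v`. -/
noncomputable def subSize (t : Finset (List ℕ)) (v : List ℕ) : ℕ :=
  (t.filter (fun w => v <+: w)).card

/-- The centrality measure `φ_t(u)`. -/
noncomputable def phi (t : Finset (List ℕ)) (u : List ℕ) : ℝ :=
  (∏ v ∈ t.filter (fun v => ¬ v <+: u), (subSize t v : ℝ)) *
  (∏ v ∈ t.filter (fun v => v ≠ [] ∧ v <+: u), ((t.card : ℝ) - subSize t v))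

/-- The competitive ratio `Φ(t) = φ_t(∅) / min_{u ∈ t} φ_t(u)`. -/
noncomputable def PhiRatio (t : Finset (List ℕ)) : ℝ :=
  phi t [] / sInf (phi t '' ↑t)

lemma pt_prefix_closed {t : Finset (List ℕ)} (ht : IsPlaneTree t) :
    ∀ w ∈ t, ∀ v, v <+: w → v ∈ t := by
  intro w
  induction w using List.reverseRecOn with
  | nil => intro hw v hv; rwa [List.prefix_nil.mp hv]
  | append_singleton ys y ih =>
    intro hw v hv
    rcases List.prefix_concat_iff.mp hv with h | h
    · rwa [h]
    · exact ih (by simpa using ht.2.1 _ hw (by simp)) v h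

lemma subSize_pos {t : Finset (List ℕ)} {v : List ℕ} (hv : v ∈ t) : 0 < subSize t v :=
  Finset.card_pos.mpr ⟨v, Finset.mem_filter.mpr ⟨hv, List.prefix_refl v⟩⟩

lemma subSize_le_of_prefix {t : Finset (List ℕ)} {v v' : List ℕ} (h : v <+: v') :
    subSize t v' ≤ subSize t v :=
  Finset.card_le_card (Finset.monotone_filter_right _ (fun w _ hw => h.trans hw))

lemma subSize_lt_card {t : Finset (List ℕ)} (hroot : [] ∈ t) {v : List ℕ} (hv : v ≠ []) :
    subSize t v < t.card := by
  refine Finset.card_lt_card (Finset.ssubset_iff_of_subset (Finset.filter_subset _ _) |>.mpr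
    ⟨[], hroot, ?_⟩)
  simp [List.prefix_nil, hv]

lemma subSize_eq_zero {t : Finset (List ℕ)} (ht : IsPlaneTree t) {v : List ℕ} (hv : v ∉ t) :
    subSize t v = 0 := by
  rw [subSize, Finset.card_eq_zero, Finset.filter_eq_empty_iff]
  intro w hw hpre
  exact hv (pt_prefix_closed ht w hw v hpre)

lemma children_sum_le {t : Finset (List ℕ)} {node : List ℕ} (N : ℕ) :
    ∑ i ∈ Finset.range N, (if node ++ [i] ∈ t then subSize t (node ++ [i]) else 0)
      ≤ subSize t node := by
  classical
  have hdisj : ∀ i ∈ Finset.range N, ∀ j ∈ Finset.range N, i ≠ j →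
      Disjoint (t.filter (fun w => node ++ [i] <+: w)) (t.filter (fun w => node ++ [j] <+: w)) := by
    intro i _ j _ hij
    rw [Finset.disjoint_left]
    intro w hwi hwj
    have h1 := (Finset.mem_filter.mp hwi).2
    have h2 := (Finset.mem_filter.mp hwj).2
    have e1 := List.prefix_iff_eq_take.mp h1
    have e2 := List.prefix_iff_eq_take.mp h2
    simp only [List.length_append, List.length_cons, List.length_nil] at e1 e2
    exact hij (by simpa using e1.trans e2.symm)
  calc ∑ i ∈ Finset.range N, (if node ++ [i] ∈ t then subSize t (node ++ [i]) else 0)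
      ≤ ∑ i ∈ Finset.range N, subSize t (node ++ [i]) := by
        apply Finset.sum_le_sum; intro i _; split <;> simp
    _ = ((Finset.range N).biUnion (fun i => t.filter (fun w => node ++ [i] <+: w))).card := by
        rw [Finset.card_biUnion hdisj]; rfl
    _ ≤ subSize t node := by
        apply Finset.card_le_card
        intro w hw
        rcases Finset.mem_biUnion.mp hw with ⟨i, _, hwi⟩
        rcases Finset.mem_filter.mp hwi with ⟨hwt, hpre⟩
        exact Finset.mem_filter.mpr ⟨hwt, ((node.prefix_append [i]).trans hpre)⟩

lemma phi_pos {t : Finset (List ℕ)} (hroot : [] ∈ t) (y : List ℕ) : 0 < phi t y := by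
  apply mul_pos
  · apply Finset.prod_pos
    intro v hv
    exact_mod_cast subSize_pos (Finset.mem_filter.mp hv).1
  · apply Finset.prod_pos
    intro v hv
    rcases Finset.mem_filter.mp hv with ⟨hvt, hne, _⟩
    have := subSize_lt_card hroot hne (t := t)
    have h2 : (subSize t v : ℝ) < t.card := by exact_mod_cast this
    linarith

lemma phi_mul_key {t : Finset (List ℕ)} (hroot : [] ∈ t) {u w : List ℕ} (huw : u <+: w) :
    phi t u * ∏ v ∈ t.filter (fun v => v <+: w ∧ ¬ v <+: u), ((t.card : ℝ) - subSize t v)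
      = phi t w * ∏ v ∈ t.filter (fun v => v <+: w ∧ ¬ v <+: u), (subSize t v : ℝ) := by
  classical
  set B := t.filter (fun v => v <+: w ∧ ¬ v <+: u) with hB
  have split1 : t.filter (fun v => ¬ v <+: u) = t.filter (fun v => ¬ v <+: w) ∪ B := by
    ext v
    simp only [hB, Finset.mem_union, Finset.mem_filter]
    constructor
    · rintro ⟨hvt, hnu⟩
      by_cases hvw : v <+: w
      · exact Or.inr ⟨hvt, hvw, hnu⟩
      · exact Or.inl ⟨hvt, hvw⟩
    · rintro (⟨hvt, hnw⟩ | ⟨hvt, _, hnu⟩)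
      · exact ⟨hvt, fun h => hnw (h.trans huw)⟩
      · exact ⟨hvt, hnu⟩
  have split2 : t.filter (fun v => v ≠ [] ∧ v <+: w)
      = t.filter (fun v => v ≠ [] ∧ v <+: u) ∪ B := by
    ext v
    simp only [hB, Finset.mem_union, Finset.mem_filter]
    constructor
    · rintro ⟨hvt, hne, hvw⟩
      by_cases hvu : v <+: u
      · exact Or.inl ⟨hvt, hne, hvu⟩
      · exact Or.inr ⟨hvt, hvw, hvu⟩
    · rintro (⟨hvt, hne, hvu⟩ | ⟨hvt, hvw, hnu⟩)
      · exact ⟨hvt, hne, hvu.trans huw⟩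
      · refine ⟨hvt, ?_, hvw⟩
        rintro rfl
        exact hnu List.nil_prefix
  have disj1 : Disjoint (t.filter (fun v => ¬ v <+: w)) B := by
    rw [Finset.disjoint_left]
    intro v h1 h2
    exact (Finset.mem_filter.mp h1).2 (Finset.mem_filter.mp h2).2.1
  have disj2 : Disjoint (t.filter (fun v => v ≠ [] ∧ v <+: u)) B := by
    rw [Finset.disjoint_left]
    intro v h1 h2
    exact (Finset.mem_filter.mp h2).2.2 (Finset.mem_filter.mp h1).2.2
  rw [phi, phi, split1, split2, Finset.prod_union disj1, Finset.prod_union disj2]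
  ring

lemma prod_path {t : Finset (List ℕ)} (ht : IsPlaneTree t) {u w : List ℕ}
    (hw : w ∈ t) (huw : u <+: w) (f : List ℕ → ℝ) :
    ∏ j ∈ Finset.range (w.length - u.length), f (w.take (u.length + j + 1))
      = ∏ v ∈ t.filter (fun v => v <+: w ∧ ¬ v <+: u), f v := by
  classical
  have hul : u.length ≤ w.length := huw.length_le
  refine Finset.prod_nbij' (fun j => w.take (u.length + j + 1))
    (fun v => v.length - u.length - 1) ?_ ?_ ?_ ?_ ?_
  · intro j hj
    rw [Finset.mem_range] at hj
    refine Finset.mem_filter.mpr ⟨pt_prefix_closed ht w hw _ (List.take_prefix _ _),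
      List.take_prefix _ _, ?_⟩
    intro hpre
    have h5 := hpre.length_le
    rw [List.length_take] at h5
    omega
  · intro v hv
    rcases Finset.mem_filter.mp hv with ⟨hvt, hvw, hnu⟩
    have huv : u <+: v := (List.prefix_or_prefix_of_prefix huw hvw).resolve_right hnu
    have h2 : v ≠ u := by rintro rfl; exact hnu (List.prefix_refl _)
    have h3 : u.length < v.length := by
      rcases lt_or_eq_of_le huv.length_le with h | h
      · exact h
      · exact absurd (huv.eq_of_length h).symm h2
    have h4 : v.length ≤ w.length := hvw.length_le
    simp only [Finset.mem_range]
    omega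
  · intro j hj
    rw [Finset.mem_range] at hj
    show (w.take (u.length + j + 1)).length - u.length - 1 = j
    rw [List.length_take]
    omega
  · intro v hv
    rcases Finset.mem_filter.mp hv with ⟨hvt, hvw, hnu⟩
    have huv : u <+: v := (List.prefix_or_prefix_of_prefix huw hvw).resolve_right hnu
    have h2 : v ≠ u := by rintro rfl; exact hnu (List.prefix_refl _)
    have h3 : u.length < v.length := by
      rcases lt_or_eq_of_le huv.length_le with h | h
      · exact h
      · exact absurd (huv.eq_of_length h).symm h2
    show w.take (u.length + (v.length - u.length - 1) + 1) = v
    have hlen : u.length + (v.length - u.length - 1) + 1 = v.length := by omega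
    rw [hlen]
    exact (List.prefix_iff_eq_take.mp hvw).symm
  · intro j hj
    rfl

noncomputable def preflow (t : Finset (List ℕ)) (u : List ℕ) (v : List ℕ) : ℝ :=
  if (∀ i ∈ v, 1 ≤ i) ∧ u ++ v.map (· - 1) ∈ t then
    (subSize t (u ++ v.map (· - 1)) : ℝ) / subSize t u
  else 0

section pre
variable {t : Finset (List ℕ)} {u : List ℕ}

lemma preflow_nonneg (v : List ℕ) : 0 ≤ preflow t u v := by
  rw [preflow]
  split
  · positivity
  · exact le_refl 0

lemma preflow_le_one (hu : u ∈ t) (v : List ℕ) : preflow t u v ≤ 1 := by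
  rw [preflow]
  split
  · rw [div_le_one (by exact_mod_cast subSize_pos hu)]
    exact_mod_cast subSize_le_of_prefix (u.prefix_append _)
  · exact zero_le_one

lemma preflow_nil (hu : u ∈ t) : preflow t u [] = 1 := by
  rw [preflow, if_pos ⟨by simp, by simpa using hu⟩]
  simp only [List.map_nil, List.append_nil]
  rw [div_self]
  exact_mod_cast (subSize_pos hu).ne'

lemma mem_lt_card_of_sibling (ht : IsPlaneTree t) {node : List ℕ} {i : ℕ} (hmem : node ++ [i] ∈ t) :
    i < t.card := by
  have hsubset : (Finset.range (i + 1)).image (fun k => node ++ [k]) ⊆ t := by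
    intro w hw
    rcases Finset.mem_image.mp hw with ⟨k, hk, rfl⟩
    exact ht.2.2 node i k hmem (Nat.lt_succ_iff.mp (Finset.mem_range.mp hk))
  have hinj : Set.InjOn (fun k => node ++ [k]) (Finset.range (i + 1)) := by
    intro a _ b _ hab
    simpa using hab
  have := Finset.card_le_card hsubset
  rwa [Finset.card_image_of_injOn hinj, Finset.card_range] at this

lemma preflow_flow (ht : IsPlaneTree t) (hu : u ∈ t) (v : List ℕ) :
    ∑' i : ℕ, preflow t u (v ++ [i + 1]) ≤ preflow t u v := by
  by_cases hcond : (∀ i ∈ v, 1 ≤ i) ∧ u ++ v.map (· - 1) ∈ t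
  · set node := u ++ v.map (· - 1) with hnode
    have hterm : ∀ i : ℕ, preflow t u (v ++ [i + 1])
        = if node ++ [i] ∈ t then (subSize t (node ++ [i]) : ℝ) / subSize t u else 0 := by
      intro i
      rw [preflow]
      have hmap : (v ++ [i + 1]).map (· - 1) = v.map (· - 1) ++ [i] := by simp
      by_cases hmem : node ++ [i] ∈ t
      · have hA : ∀ x ∈ v ++ [i + 1], 1 ≤ x := by
          intro x hx
          rcases List.mem_append.mp hx with h | h
          · exact hcond.1 x h
          · simp at h; omega
        have hB : u ++ (v ++ [i + 1]).map (· - 1) ∈ t := by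
          rw [hmap, ← List.append_assoc, ← hnode]; exact hmem
        rw [if_pos ⟨hA, hB⟩, if_pos hmem, hmap, ← List.append_assoc, ← hnode]
      · rw [if_neg, if_neg hmem]
        rintro ⟨-, h⟩
        rw [hmap, ← List.append_assoc, ← hnode] at h
        exact hmem h
    have hzero : ∀ i ∉ Finset.range t.card, preflow t u (v ++ [i + 1]) = 0 := by
      intro i hi
      rw [hterm i, if_neg]
      intro hmem
      exact hi (Finset.mem_range.mpr (mem_lt_card_of_sibling ht hmem))
    rw [tsum_eq_sum hzero]
    have hSu : (0 : ℝ) < subSize t u := by exact_mod_cast subSize_pos hu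
    have : ∑ i ∈ Finset.range t.card, preflow t u (v ++ [i + 1])
        = (∑ i ∈ Finset.range t.card,
            (if node ++ [i] ∈ t then (subSize t (node ++ [i]) : ℕ) else 0) : ℕ) / subSize t u := by
      push_cast
      rw [Finset.sum_div]
      refine Finset.sum_congr rfl fun i _ => ?_
      rw [hterm i]
      split <;> simp
    rw [this, preflow, if_pos hcond, div_le_div_iff_of_pos_right hSu]
    exact_mod_cast children_sum_le t.card
  · have hzero : ∀ i : ℕ, preflow t u (v ++ [i + 1]) = 0 := by
      intro i
      rw [preflow, if_neg]
      rintro ⟨h1, h2⟩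
      refine hcond ⟨fun x hx => h1 x (List.mem_append_left _ hx), ?_⟩
      have hmap : (v ++ [i + 1]).map (· - 1) = v.map (· - 1) ++ [i] := by simp
      rw [hmap, ← List.append_assoc] at h2
      exact pt_prefix_closed ht _ h2 _ ((u ++ v.map (· - 1)).prefix_append [i])
    simp only [hzero, tsum_zero]
    rw [preflow, if_neg hcond]

lemma preflow_dary (ht : IsPlaneTree t) {d : ℕ} (hd : 2 ≤ d)
    (hdary : ∀ v ∈ t, u <+: v →
      (t.filter (fun w => ∃ j, w = v ++ [j])).card = 0 ∨
      (t.filter (fun w => ∃ j, w = v ++ [j])).card = d)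
    (v : List ℕ) (j : ℕ) (hj : d + 1 ≤ j) : preflow t u (v ++ [j]) = 0 := by
  rw [preflow, if_neg]
  rintro ⟨h1, h2⟩
  have hmap : (v ++ [j]).map (· - 1) = v.map (· - 1) ++ [j - 1] := by simp
  rw [hmap, ← List.append_assoc] at h2
  set node := u ++ v.map (· - 1) with hnode
  have hnodet : node ∈ t := pt_prefix_closed ht _ h2 _ (node.prefix_append _)
  have hpre : u <+: node := u.prefix_append _
  have hcard : d + 1 ≤ (t.filter (fun w => ∃ j, w = node ++ [j])).card := by
    have hsubset : (Finset.range (j - 1 + 1)).image (fun k => node ++ [k])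
        ⊆ t.filter (fun w => ∃ j, w = node ++ [j]) := by
      intro w hw
      rcases Finset.mem_image.mp hw with ⟨k, hk, rfl⟩
      exact Finset.mem_filter.mpr
        ⟨ht.2.2 node (j - 1) k h2 (Nat.lt_succ_iff.mp (Finset.mem_range.mp hk)), k, rfl⟩
    have hinj : Set.InjOn (fun k => node ++ [k]) (Finset.range (j - 1 + 1)) := by
      intro a _ b _ hab; simpa using hab
    have := Finset.card_le_card hsubset
    rw [Finset.card_image_of_injOn hinj, Finset.card_range] at this
    omega
  rcases hdary node hnodet hpre with h | h <;> omega

end pre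

/-- If `c > 0` is such that every `d`-ary preflow `p` satisfies
`N_x(p) ≤ exp(c + c √(log x))` for all `x ≥ 1`, then for any plane tree `t`
and node `u ∈ t` whose subtree is `d`-ary and of size at most `|t|/3`, the
number of nodes of the subtree of `u` that are at least as central as the root
is at most `exp(c + c √(log Φ(t)))`. -/
theorem stmt10 (d : ℕ) (hd : 2 ≤ d) (c : ℝ) (hc : 0 < c)
    (hpre : ∀ p : List ℕ → ℝ,
      (∀ u, 0 ≤ p u ∧ p u ≤ 1) → p [] = 1 →
      (∀ u : List ℕ, ∑' i : ℕ, p (u ++ [i + 1]) ≤ p u) →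
      (∀ u : List ℕ, ∀ j : ℕ, d + 1 ≤ j → p (u ++ [j]) = 0) →
      ∀ x : ℝ, 1 ≤ x →
      (({u : List ℕ | (∀ i ∈ u, 1 ≤ i) ∧
          1 ≤ x * ∏ j ∈ Finset.range u.length, p (u.take (j + 1)) / 2}).ncard : ℝ)
        ≤ Real.exp (c + c * Real.sqrt (Real.log x)))
    (t : Finset (List ℕ)) (ht : IsPlaneTree t) (u : List ℕ) (hu : u ∈ t)
    (hdary : ∀ v ∈ t, u <+: v →
      (t.filter (fun w => ∃ j, w = v ++ [j])).card = 0 ∨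
      (t.filter (fun w => ∃ j, w = v ++ [j])).card = d)
    (hsmall : 3 * subSize t u ≤ t.card) :
    ((t.filter (fun w => u <+: w ∧ phi t w ≤ phi t [])).card : ℝ)
      ≤ Real.exp (c + c * Real.sqrt (Real.log (PhiRatio t))) := by
  classical
  have hroot : [] ∈ t := ht.1
  have hne : (phi t '' ↑t).Nonempty := ⟨phi t [], ⟨[], hroot, rfl⟩⟩
  have hfin : (phi t '' ↑t).Finite := t.finite_toSet.image _
  set m := sInf (phi t '' ↑t) with hm
  have hmmem : m ∈ phi t '' ↑t := hne.csInf_mem hfin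
  have hmpos : 0 < m := by
    rcases hmmem with ⟨y, _, hy⟩
    rw [← hy]; exact phi_pos hroot y
  have hmle : ∀ y ∈ t, m ≤ phi t y := fun y hy => csInf_le hfin.bddBelow ⟨y, hy, rfl⟩
  have hx1 : 1 ≤ PhiRatio t := by
    rw [PhiRatio, le_div_iff₀ hmpos, one_mul]
    exact hmle [] hroot
  have hSu : (0 : ℝ) < subSize t u := by exact_mod_cast subSize_pos hu
  have hbound := hpre (preflow t u)
    (fun v => ⟨preflow_nonneg v, preflow_le_one hu v⟩) (preflow_nil hu)
    (preflow_flow ht hu) (preflow_dary ht hd hdary) (PhiRatio t) hx1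
  set T := {v : List ℕ | (∀ i ∈ v, 1 ≤ i) ∧
      1 ≤ PhiRatio t * ∏ j ∈ Finset.range v.length, preflow t u (v.take (j + 1)) / 2} with hT
  set g : List ℕ → List ℕ := fun w => (w.drop u.length).map (· + 1) with hg
  set F := t.filter (fun w => u <+: w ∧ phi t w ≤ phi t []) with hF
  -- membership of images
  have hmem : ∀ w ∈ F, g w ∈ T := by
    intro w hwF
    rcases Finset.mem_filter.mp hwF with ⟨hwt, huw, hphiw⟩
    obtain ⟨s, rfl⟩ := huw
    have hdrop : (u ++ s).drop u.length = s := List.drop_left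
    have hglen : (g (u ++ s)).length = (u ++ s).length - u.length := by
      simp [hg, hdrop]
    have hL : (u ++ s).length - u.length = s.length := by simp
    -- factor identification
    have hfac : ∀ j ∈ Finset.range s.length,
        preflow t u ((g (u ++ s)).take (j + 1)) / 2
          = (fun y => (subSize t y : ℝ) / (2 * subSize t u)) ((u ++ s).take (u.length + j + 1)) := by
      intro j hj
      rw [Finset.mem_range] at hj
      have htake : (g (u ++ s)).take (j + 1) = (s.take (j + 1)).map (· + 1) := by
        rw [hg]; simp [hdrop, List.map_take]
      have hdec : ((s.take (j + 1)).map (· + 1)).map (· - 1) = s.take (j + 1) := by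
        rw [List.map_map]
        refine List.map_congr_left (fun a _ => ?_) |>.trans (List.map_id _)
        simp
      have hnodeq : u ++ s.take (j + 1) = (u ++ s).take (u.length + j + 1) := by
        rw [List.take_append]
        congr 1
        · rw [List.take_of_length_le]; omega
        · congr 1; omega
      have hnodet : (u ++ s).take (u.length + j + 1) ∈ t :=
        pt_prefix_closed ht _ hwt _ (List.take_prefix _ _)
      have hA : ∀ i ∈ (s.take (j + 1)).map (· + 1), 1 ≤ i := by
        intro i hi
        rcases List.mem_map.mp hi with ⟨a, _, rfl⟩
        omega
      have hBm : u ++ ((s.take (j + 1)).map (· + 1)).map (· - 1) ∈ t := by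
        rw [hdec, hnodeq]; exact hnodet
      rw [htake, preflow, if_pos ⟨hA, hBm⟩, hdec, hnodeq]
      push_cast
      rw [div_div]
      ring_nf
    -- the two products over the path
    have hprod1 : ∏ j ∈ Finset.range s.length, preflow t u ((g (u ++ s)).take (j + 1)) / 2
        = ∏ v ∈ t.filter (fun v => v <+: u ++ s ∧ ¬ v <+: u),
            (subSize t v : ℝ) / (2 * subSize t u) := by
      rw [Finset.prod_congr rfl hfac, ← hL,
        prod_path ht hwt (u.prefix_append s) (fun y => (subSize t y : ℝ) / (2 * subSize t u))]
    have hB : ∀ v ∈ t.filter (fun v => v <+: u ++ s ∧ ¬ v <+: u),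
        (subSize t v : ℝ) / ((t.card : ℝ) - subSize t v)
          ≤ (subSize t v : ℝ) / (2 * subSize t u) ∧
        0 < (t.card : ℝ) - subSize t v ∧ u <+: v := by
      intro v hv
      rcases Finset.mem_filter.mp hv with ⟨hvt, hvw, hnu⟩
      have huv : u <+: v :=
        (List.prefix_or_prefix_of_prefix (u.prefix_append s) hvw).resolve_right hnu
      have hSv : (subSize t v : ℝ) ≤ subSize t u := by
        exact_mod_cast subSize_le_of_prefix huv
      have hcard : 3 * (subSize t u : ℝ) ≤ t.card := by exact_mod_cast hsmall
      have hpos : (0 : ℝ) < (t.card : ℝ) - subSize t v := by linarith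
      refine ⟨?_, hpos, huv⟩
      apply div_le_div_of_nonneg_left (by positivity) (by linarith) (by linarith)
    -- key identity
    have hkey := phi_mul_key hroot (t := t) (u.prefix_append s)
    have hprodpos : 0 < ∏ v ∈ t.filter (fun v => v <+: u ++ s ∧ ¬ v <+: u),
        ((t.card : ℝ) - subSize t v) :=
      Finset.prod_pos (fun v hv => (hB v hv).2.1)
    have hphiu : phi t u = phi t (u ++ s) * ∏ v ∈ t.filter (fun v => v <+: u ++ s ∧ ¬ v <+: u),
        ((subSize t v : ℝ) / ((t.card : ℝ) - subSize t v)) := by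
      rw [Finset.prod_div_distrib, mul_div_assoc', eq_div_iff hprodpos.ne']
      linarith [hkey]
    have hRP : ∏ v ∈ t.filter (fun v => v <+: u ++ s ∧ ¬ v <+: u),
          ((subSize t v : ℝ) / ((t.card : ℝ) - subSize t v))
        ≤ ∏ v ∈ t.filter (fun v => v <+: u ++ s ∧ ¬ v <+: u),
          ((subSize t v : ℝ) / (2 * subSize t u)) := by
      apply Finset.prod_le_prod
      · intro v hv; exact div_nonneg (Nat.cast_nonneg _) (hB v hv).2.1.le
      · intro v hv; exact (hB v hv).1
    have hphiwpos : 0 < phi t (u ++ s) := phi_pos hroot _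
    have hfinal : m ≤ phi t [] * ∏ j ∈ Finset.range s.length,
        preflow t u ((g (u ++ s)).take (j + 1)) / 2 := by
      rw [hprod1]
      calc m ≤ phi t u := hmle u hu
        _ = phi t (u ++ s) * _ := hphiu
        _ ≤ phi t (u ++ s) * ∏ v ∈ t.filter (fun v => v <+: u ++ s ∧ ¬ v <+: u),
              ((subSize t v : ℝ) / (2 * subSize t u)) :=
            mul_le_mul_of_nonneg_left hRP hphiwpos.le
        _ ≤ phi t [] * ∏ v ∈ t.filter (fun v => v <+: u ++ s ∧ ¬ v <+: u),
              ((subSize t v : ℝ) / (2 * subSize t u)) := by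
            apply mul_le_mul_of_nonneg_right hphiw
            apply Finset.prod_nonneg
            intro v hv
            exact div_nonneg (Nat.cast_nonneg _) (by positivity)
    refine ⟨?_, ?_⟩
    · intro i hi
      rcases List.mem_map.mp hi with ⟨a, _, rfl⟩
      omega
    · rw [PhiRatio, div_mul_eq_mul_div, le_div_iff₀ hmpos, one_mul]
      calc m ≤ phi t [] * ∏ j ∈ Finset.range s.length,
            preflow t u ((g (u ++ s)).take (j + 1)) / 2 := hfinal
        _ = phi t [] * ∏ j ∈ Finset.range (g (u ++ s)).length,
            preflow t u ((g (u ++ s)).take (j + 1)) / 2 := by rw [hglen, hL]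
  -- T is finite
  have hTfin : T.Finite := by
    apply Set.Finite.subset (t.finite_toSet.image g)
    intro v hv
    rcases hv with ⟨hvpos, hvprod⟩
    by_cases hvnil : v = []
    · refine ⟨u, hu, ?_⟩
      simp [hg, hvnil]
    · have hfac : preflow t u v ≠ 0 := by
        intro h0
        have : ∏ j ∈ Finset.range v.length, preflow t u (v.take (j + 1)) / 2 = 0 := by
          apply Finset.prod_eq_zero (i := v.length - 1)
          · rw [Finset.mem_range]
            have := List.length_pos_iff.mpr hvnil
            omega
          · have : v.length - 1 + 1 = v.length := by
              have := List.length_pos_iff.mpr hvnil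
              omega
            rw [this, List.take_length, h0, zero_div]
        rw [this, mul_zero] at hvprod
        linarith
      rw [preflow] at hfac
      split at hfac
      · rename_i hcond
        refine ⟨u ++ v.map (· - 1), hcond.2, ?_⟩
        show ((u ++ v.map (· - 1)).drop u.length).map (· + 1) = v
        rw [List.drop_left, List.map_map]
        refine (List.map_congr_left (fun a ha => ?_)).trans (List.map_id _)
        have := hvpos a ha
        simp; omega
      · exact absurd rfl hfac
  -- injectivity
  have hinj : Set.InjOn g ↑F := by
    intro w1 h1 w2 h2 heq
    have hu1 : u <+: w1 := by
      have h1' : w1 ∈ F := h1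
      rw [hF, Finset.mem_filter] at h1'
      exact h1'.2.1
    have hu2 : u <+: w2 := by
      have h2' : w2 ∈ F := h2
      rw [hF, Finset.mem_filter] at h2'
      exact h2'.2.1
    obtain ⟨s1, rfl⟩ := hu1
    obtain ⟨s2, rfl⟩ := hu2
    rw [hg] at heq
    simp only [List.drop_left] at heq
    have : s1 = s2 := by
      have hinjf : Function.Injective (· + 1 : ℕ → ℕ) := fun a b h => by simpa using h
      exact List.map_injective_iff.mpr hinjf heq
    rw [this]
  have hcard : F.card = (F.image g).card := (Finset.card_image_of_injOn hinj).symm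
  have hsub : ↑(F.image g) ⊆ T := by
    intro v hv
    rcases Finset.mem_coe.mp (by exact_mod_cast hv) with hv'
    rcases Finset.mem_image.mp hv' with ⟨w, hw, rfl⟩
    exact hmem w hw
  have hle : ((F.image g).card : ℕ) ≤ T.ncard := by
    rw [← Set.ncard_coe_finset]
    exact Set.ncard_le_ncard hsub hTfin
  calc (F.card : ℝ) = ((F.image g).card : ℝ) := by rw [hcard]
    _ ≤ (T.ncard : ℝ) := by exact_mod_cast hle
    _ ≤ Real.exp (c + c * Real.sqrt (Real.log (PhiRatio t))) := hbound
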